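/- arXiv:math/0610669 — 2 statements merged into one kernel-verified Lean document; each statement's English description precedes it below -/
import Mathlib

section
/- Let k be a field of characteristic zero, G a finite group, and W a finite-dimensional k-vector space equipped with a k-linear action of G preserving a nondegenerate alternating bilinear form B (i.e. B(g·v,g·w) = B(v,w), B(v,v) = 0, and for every nonzero a there is w with B(a,w) ≠ 0). Then the representation has the codimension 2 property: for every pair of subgroups A ⊆ B ⊆ G with A normal in B, one has dim_k W^A − dim_k W^B ≠ 1. -/
/-- The subspace of vectors fixed by every element of a subgroup `H` of `G`, for a
representation `ρ` of `G` on `W`. -/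
def fixedSubmodule {k G W : Type*} [Field k] [AddCommGroup W] [Module k W] [Group G]
    (ρ : Representation k G W) (H : Subgroup G) : Submodule k W where
  carrier := {w | ∀ h ∈ H, ρ h w = w}
  add_mem' := fun ha hb h hh => by simp only [map_add, ha h hh, hb h hh]
  zero_mem' := fun h hh => by simp
  smul_mem' := fun c w hw h hh => by simp only [map_smul, hw h hh]

/-- A finite-dimensional space with a nondegenerate alternating bilinear form has even
dimension (char 0). -/
lemma even_finrank_of_alt_nondeg {k V : Type*} [Field k] [CharZero k] [AddCommGroup V]
    [Module k V] [FiniteDimensional k V] (B : LinearMap.BilinForm k V)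
    (halt : B.IsAlt) (hnd : B.Nondegenerate) :
    Even (Module.finrank k V) := by
  classical
  let b := Module.finBasis k V
  set M := LinearMap.BilinForm.toMatrix b B with hM
  have hdet : M.det ≠ 0 := (LinearMap.BilinForm.nondegenerate_iff_det_ne_zero b).mp hnd
  have hskew : Matrix.transpose M = -M := by
    ext i j
    have h0 := LinearMap.IsAlt.neg halt (b i) (b j)
    have h : B (b j) (b i) = -(B (b i) (b j)) := by
      rw [← h0]
    simp only [hM, Matrix.transpose_apply, Matrix.neg_apply, LinearMap.BilinForm.toMatrix_apply]
    exact h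
  by_contra hodd
  have hoddn : Odd (Module.finrank k V) := Nat.not_even_iff_odd.mp hodd
  have hdet2 : M.det = -M.det := by
    conv_lhs => rw [← Matrix.det_transpose, hskew, Matrix.det_neg]
    rw [Fintype.card_fin, hoddn.neg_one_pow]
    ring
  have h2 : (2 : k) * M.det = 0 := by
    rw [two_mul]
    nth_rewrite 1 [hdet2]
    exact neg_add_cancel _
  rcases mul_eq_zero.mp h2 with h | h
  · exact two_ne_zero h
  · exact hdet h

lemma even_finrank_fixed {k W G : Type*} [Field k] [CharZero k]
    [AddCommGroup W] [Module k W] [FiniteDimensional k W]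
    [Group G] [Finite G] (ρ : Representation k G W)
    (B : LinearMap.BilinForm k W)
    (hGinv : ∀ (g : G) (v w : W), B (ρ g v) (ρ g w) = B v w)
    (halt : ∀ v : W, B v v = 0)
    (hnd : ∀ a : W, a ≠ 0 → ∃ w : W, B a w ≠ 0) (H : Subgroup G) :
    Even (Module.finrank k (fixedSubmodule ρ H)) := by
  classical
  haveI : Fintype H := Fintype.ofFinite H
  have hc0 : (Fintype.card H : k) ≠ 0 := Nat.cast_ne_zero.mpr Fintype.card_ne_zero
  set π : W →ₗ[k] W := (Fintype.card H : k)⁻¹ • ∑ h : H, ρ (h : G) with hπ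
  have hπapp : ∀ w : W, π w = (Fintype.card H : k)⁻¹ • ∑ h : H, ρ (h : G) w := by
    intro w
    simp [hπ, LinearMap.sum_apply]
  -- ρ g⁻¹ (ρ g v) = v
  have hinvfix : ∀ (g : G) (v : W), ρ g⁻¹ (ρ g v) = v := by
    intro g v
    have h1 : ρ g⁻¹ * ρ g = 1 := by rw [← map_mul, inv_mul_cancel, map_one]
    calc ρ g⁻¹ (ρ g v) = (ρ g⁻¹ * ρ g) v := rfl
      _ = v := by rw [h1]; rfl
  -- π lands in the fixed submodule
  have hmem : ∀ w : W, π w ∈ fixedSubmodule ρ H := by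
    intro w g hg
    have key : ρ g (∑ h : H, ρ (h : G) w) = ∑ h : H, ρ (h : G) w := by
      calc ρ g (∑ h : H, ρ (h : G) w) = ∑ h : H, ρ g (ρ (h : G) w) := map_sum _ _ _
        _ = ∑ h : H, ρ (((⟨g, hg⟩ : H) * h : H) : G) w := by
            refine Finset.sum_congr rfl fun h _ => ?_
            rw [Subgroup.coe_mul, map_mul]
            rfl
        _ = ∑ h : H, ρ (h : G) w :=
            Fintype.sum_equiv (Equiv.mulLeft (⟨g, hg⟩ : H)) _ _ (fun h => rfl)
    rw [hπapp, map_smul, key, ← hπapp]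
  -- π fixes the fixed submodule
  have hfix : ∀ w ∈ fixedSubmodule ρ H, π w = w := by
    intro w hw
    have hsum : ∑ h : H, ρ (h : G) w = (Fintype.card H : k) • w := by
      have : ∀ h : H, ρ (h : G) w = w := fun h => hw h.1 h.2
      rw [Finset.sum_congr rfl fun h _ => this h]
      rw [Finset.sum_const, Finset.card_univ]
      rw [← Nat.cast_smul_eq_nsmul k]
    rw [hπapp, hsum, smul_smul, inv_mul_cancel₀ hc0, one_smul]
  -- π is self-adjoint w.r.t. B
  have hadj : ∀ v w : W, B (π v) w = B v (π w) := by
    intro v w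
    have step : ∀ g : G, B (ρ g v) w = B v (ρ g⁻¹ w) := by
      intro g
      have h := hGinv g⁻¹ (ρ g v) w
      rw [hinvfix g v] at h
      exact h.symm
    have lhs : B (π v) w = (Fintype.card H : k)⁻¹ * ∑ h : H, B (ρ (h : G) v) w := by
      rw [hπapp, map_smul, map_sum]
      simp [Finset.sum_apply, LinearMap.coe_sum]
    have rhs : B v (π w) = (Fintype.card H : k)⁻¹ * ∑ h : H, B v (ρ (h : G) w) := by
      rw [hπapp, map_smul, map_sum]
      simp
    rw [lhs, rhs]
    congr 1
    calc ∑ h : H, B (ρ (h : G) v) w = ∑ h : H, B v (ρ ((h : G))⁻¹ w) :=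
          Finset.sum_congr rfl fun h _ => step h.1
      _ = ∑ h : H, B v (ρ (((h⁻¹ : H)) : G) w) := by
          refine Finset.sum_congr rfl fun h _ => ?_
          rfl
      _ = ∑ h : H, B v (ρ (h : G) w) :=
          Fintype.sum_equiv (Equiv.inv H) _ _ (fun h => rfl)
  -- restricted form
  set p := fixedSubmodule ρ H with hp
  have hndr : (B.restrict p).Nondegenerate := by
    have hsep : (B.restrict p).SeparatingLeft := by
      intro v hv
      by_contra hv0
      have hv0' : (v : W) ≠ 0 := fun h => hv0 (Subtype.ext h)
      obtain ⟨w, hw⟩ := hnd (v : W) hv0'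
      have hzero : B (v : W) (π w) = 0 := hv ⟨π w, hmem w⟩
      have : B (v : W) w = B (v : W) (π w) := by
        conv_lhs => rw [← hfix (v : W) v.2]
        rw [hadj]
      exact hw (this.trans hzero)
    exact (LinearMap.IsAlt.isRefl (show (B.restrict p).IsAlt from fun v => halt (v : W))).nondegenerate_iff_separatingLeft.mpr hsep
  have haltr : (B.restrict p).IsAlt := fun v => halt (v : W)
  exact even_finrank_of_alt_nondeg (B.restrict p) haltr hndr

/-- A symplectic representation of a finite group (over a field of characteristic zero)
has the codimension 2 property: `dim W^A − dim W^B ≠ 1` whenever `A ◁ B ≤ G`. -/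
theorem luna_stmt6 (k W G : Type*) [Field k] [CharZero k]
    [AddCommGroup W] [Module k W] [FiniteDimensional k W]
    [Group G] [Finite G] (ρ : Representation k G W)
    (B : LinearMap.BilinForm k W)
    (hGinv : ∀ (g : G) (v w : W), B (ρ g v) (ρ g w) = B v w)
    (halt : ∀ v : W, B v v = 0)
    (hnd : ∀ a : W, a ≠ 0 → ∃ w : W, B a w ≠ 0) :
    ∀ A B' : Subgroup G, A ≤ B' → (∀ b ∈ B', ∀ a ∈ A, b * a * b⁻¹ ∈ A) →
      (Module.finrank k (fixedSubmodule ρ A) : ℤ) -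
        (Module.finrank k (fixedSubmodule ρ B') : ℤ) ≠ 1 := by
  intro A B' _ _
  obtain ⟨a, ha⟩ := even_finrank_fixed ρ B hGinv halt hnd A
  obtain ⟨b, hb⟩ := even_finrank_fixed ρ B hGinv halt hnd B'
  rw [ha, hb]
  push_cast
  omega
end

section
/- Let τ_0 = [(1,1),(1,1),(1,1),(1,1)] and ν_0 = [(2,1),(1,2)], both elements of RT_4, and let α : RT_4 → RT_4 be the permutation that interchanges τ_0 and ν_0 and fixes every other element of RT_4. Then α is a nontrivial automorphism of the partially ordered set (RT_4, ⪯): for all τ, μ ∈ RT_4, τ ⪯ μ if and only if α(τ) ⪯ α(μ). -/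
/-- `IsRT n τ` : `τ` is a representation type of total dimension `n`, i.e. a finite
multiset of pairs `(d, e)` of positive integers with `∑ d·e = n`. -/
def IsRT (n : ℕ) (τ : Multiset (ℕ × ℕ)) : Prop :=
  (∀ p ∈ τ, 0 < p.1 ∧ 0 < p.2) ∧ (τ.map fun p => p.1 * p.2).sum = n

/-- `ElemRef τ τ'` : `τ'` is obtained from `τ` by a single elementary refinement:
either (1) replacing one pair `(d, e)` by `(a, e), (b, e)` with `a, b ≥ 1`, `a + b = d`,
or (2) replacing two pairs `(d, e), (d, e')` with the same first coordinate by the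
single pair `(d, e + e')`. -/
def ElemRef (τ τ' : Multiset (ℕ × ℕ)) : Prop :=
  (∃ (σ : Multiset (ℕ × ℕ)) (d e a b : ℕ), 0 < a ∧ 0 < b ∧ a + b = d ∧
      τ = (d, e) ::ₘ σ ∧ τ' = (a, e) ::ₘ (b, e) ::ₘ σ) ∨
  (∃ (σ : Multiset (ℕ × ℕ)) (d e e' : ℕ),
      τ = (d, e) ::ₘ (d, e') ::ₘ σ ∧ τ' = (d, e + e') ::ₘ σ)

/-- `RTle μ τ` (i.e. `μ ⪯ τ`) : `μ` is obtained from `τ` by a (possibly empty) finite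
sequence of elementary refinements; the reflexive–transitive closure of `ElemRef`. -/
def RTle (μ τ : Multiset (ℕ × ℕ)) : Prop :=
  Relation.ReflTransGen ElemRef τ μ

/-!
In the graph of elementary refinements on `RT_4`, `τ₀` and `ν₀` have the same neighbours:
the only elementary refinement of either is `[(1,2),(1,1),(1,1)]`, and the only element of
`RT_4` of which either is an elementary refinement is `[(2,1),(1,1),(1,1)]`. Transposing two
vertices with the same in- and out-neighbours is an automorphism of a relation, hence also of
its reflexive–transitive closure `⪯`.
-/

theorem Multiset.eq_cons_iff_mem_erase {α : Type*} [DecidableEq α] {s t : Multiset α} {a : α} :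
    s = a ::ₘ t ↔ a ∈ s ∧ t = s.erase a := by
  constructor
  · rintro rfl
    simp
  · rintro ⟨ha, rfl⟩
    exact (Multiset.cons_erase ha).symm

theorem Multiset.cons_eq_iff_mem_erase {α : Type*} [DecidableEq α] {s t : Multiset α} {a : α} :
    a ::ₘ t = s ↔ a ∈ s ∧ t = s.erase a := by
  rw [eq_comm, Multiset.eq_cons_iff_mem_erase]

namespace Relation

variable {α β : Type*} {r : α → α → Prop} {s : Set α}

theorem ReflTransGen.lift_of_mapsTo {p : β → β → Prop} (f : α → β)
    (hs : ∀ a b, a ∈ s → r a b → b ∈ s) (hf : ∀ a b, a ∈ s → r a b → p (f a) (f b)) {a b : α}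
    (ha : a ∈ s) (hab : ReflTransGen r a b) : ReflTransGen p (f a) (f b) := by
  induction hab using ReflTransGen.head_induction_on with
  | refl => rfl
  | head hac _ ih => exact .head (hf _ _ ha hac) (ih (hs _ _ ha hac))

variable [DecidableEq α] {x y : α}

theorem swap_apply_rel_swap_apply (hsucc : ∀ c, r x c ↔ r y c)
    (hpred : ∀ b ∈ s, r b x ↔ r b y) {b c : α} (hb : b ∈ s) (hbc : r b c) :
    r (Equiv.swap x y b) (Equiv.swap x y c) := by
  have swap_left : ∀ {c}, r b c → r (Equiv.swap x y b) c := by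
    intro c h
    rw [Equiv.swap_apply_def]
    split_ifs with hbx hby
    · exact (hsucc c).1 (hbx ▸ h)
    · exact (hsucc c).2 (hby ▸ h)
    · exact h
  apply swap_left
  rw [Equiv.swap_apply_def]
  split_ifs with hcx hcy
  · exact (hpred b hb).1 (hcx ▸ hbc)
  · exact (hpred b hb).2 (hcy ▸ hbc)
  · exact hbc

theorem reflTransGen_swap_apply_iff (hs : ∀ a b, a ∈ s → r a b → b ∈ s) (hx : x ∈ s)
    (hy : y ∈ s) (hsucc : ∀ c, r x c ↔ r y c) (hpred : ∀ b ∈ s, r b x ↔ r b y) {a b : α}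
    (ha : a ∈ s) :
    ReflTransGen r (Equiv.swap x y a) (Equiv.swap x y b) ↔ ReflTransGen r a b := by
  have hswap : ∀ {a b}, a ∈ s → ReflTransGen r a b →
      ReflTransGen r (Equiv.swap x y a) (Equiv.swap x y b) :=
    ReflTransGen.lift_of_mapsTo _ hs fun _ _ ↦ swap_apply_rel_swap_apply hsucc hpred
  refine ⟨fun h ↦ ?_, hswap ha⟩
  simpa using hswap ((Equiv.bijOn_swap hx hy).mapsTo ha) h

end Relation

theorem IsRT.of_elemRef {n : ℕ} {τ τ' : Multiset (ℕ × ℕ)} (hτ : IsRT n τ) (h : ElemRef τ τ') :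
    IsRT n τ' := by
  obtain ⟨hpos, hsum⟩ := hτ
  rcases h with ⟨σ, d, e, a, b, ha, hb, rfl, rfl, rfl⟩ | ⟨σ, d, e, e', rfl, rfl⟩
  · have he := (hpos _ (Multiset.mem_cons_self _ _)).2
    refine ⟨?_, ?_⟩
    · simp only [Multiset.mem_cons, forall_eq_or_imp] at hpos ⊢
      exact ⟨⟨ha, he⟩, ⟨hb, he⟩, hpos.2⟩
    · simp only [Multiset.map_cons, Multiset.sum_cons] at hsum ⊢
      rw [← hsum, add_mul, add_assoc]
  · refine ⟨?_, ?_⟩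
    · simp only [Multiset.mem_cons, forall_eq_or_imp] at hpos ⊢
      exact ⟨⟨hpos.1.1, Nat.add_pos_left hpos.1.2 _⟩, hpos.2.2⟩
    · simp only [Multiset.map_cons, Multiset.sum_cons] at hsum ⊢
      rw [← hsum, mul_add, add_assoc]

local notation "τ₀" => ({(1, 1), (1, 1), (1, 1), (1, 1)} : Multiset (ℕ × ℕ))
local notation "ν₀" => ({(2, 1), (1, 2)} : Multiset (ℕ × ℕ))

theorem elemRef_tau0_left_iff {c : Multiset (ℕ × ℕ)} :
    ElemRef τ₀ c ↔ c = {(1, 2), (1, 1), (1, 1)} := by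
  constructor
  · rintro (⟨σ, d, e, a₁, a₂, ha₁, ha₂, rfl, h, rfl⟩ | ⟨σ, d, e, e', h, rfl⟩) <;>
      simp only [Multiset.insert_eq_cons, Multiset.eq_cons_iff_mem_erase, Multiset.mem_cons,
        Multiset.mem_singleton, Prod.mk.injEq, or_self] at h
    · omega
    · obtain ⟨⟨rfl, rfl⟩, h⟩ := h
      simp only [Multiset.erase_cons_head, Multiset.cons_eq_iff_mem_erase, Multiset.mem_cons,
        Multiset.mem_singleton, Prod.mk.injEq, true_and, or_self] at h
      obtain ⟨rfl, rfl⟩ := h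
      decide
  · rintro rfl
    exact Or.inr ⟨{(1, 1), (1, 1)}, 1, 1, 1, rfl, rfl⟩

theorem elemRef_nu0_left_iff {c : Multiset (ℕ × ℕ)} :
    ElemRef ν₀ c ↔ c = {(1, 2), (1, 1), (1, 1)} := by
  constructor
  · rintro (⟨σ, d, e, a₁, a₂, ha₁, ha₂, rfl, h, rfl⟩ | ⟨σ, d, e, e', h, rfl⟩) <;>
      simp only [Multiset.insert_eq_cons, Multiset.eq_cons_iff_mem_erase, Multiset.mem_cons,
        Multiset.mem_singleton, Prod.mk.injEq] at h
    · obtain ⟨⟨hab, rfl⟩ | ⟨hab, rfl⟩, rfl⟩ := h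
      · obtain ⟨rfl, rfl⟩ : a₁ = 1 ∧ a₂ = 1 := by omega
        decide
      · omega
    · obtain ⟨⟨rfl, rfl⟩ | ⟨rfl, rfl⟩, h⟩ := h <;> simp [Multiset.cons_eq_iff_mem_erase] at h
  · rintro rfl
    exact Or.inl ⟨{(1, 2)}, 2, 1, 1, 1, one_pos, one_pos, rfl, rfl, by decide⟩

theorem elemRef_tau0_right_iff {b : Multiset (ℕ × ℕ)} (hb : ∀ p ∈ b, 0 < p.2) :
    ElemRef b τ₀ ↔ b = {(2, 1), (1, 1), (1, 1)} := by
  constructor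
  · rintro (⟨σ, d, e, a₁, a₂, ha₁, ha₂, rfl, rfl, h⟩ | ⟨σ, d, e, e', rfl, h⟩) <;>
      simp only [Multiset.insert_eq_cons, Multiset.eq_cons_iff_mem_erase, Multiset.mem_cons,
        Multiset.mem_singleton, Prod.mk.injEq, or_self] at h
    · obtain ⟨⟨rfl, rfl⟩, h⟩ := h
      simp only [Multiset.erase_cons_head, Multiset.cons_eq_iff_mem_erase, Multiset.mem_cons,
        Multiset.mem_singleton, Prod.mk.injEq, and_true, or_self] at h
      obtain ⟨rfl, rfl⟩ := h
      decide
    · have := hb (d, e) (by simp)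
      have := hb (d, e') (by simp)
      omega
  · rintro rfl
    exact Or.inl ⟨{(1, 1), (1, 1)}, 2, 1, 1, 1, one_pos, one_pos, rfl, rfl, by decide⟩

theorem elemRef_nu0_right_iff {b : Multiset (ℕ × ℕ)} (hb : ∀ p ∈ b, 0 < p.2) :
    ElemRef b ν₀ ↔ b = {(2, 1), (1, 1), (1, 1)} := by
  constructor
  · rintro (⟨σ, d, e, a₁, a₂, ha₁, ha₂, rfl, rfl, h⟩ | ⟨σ, d, e, e', rfl, h⟩) <;>
      simp only [Multiset.insert_eq_cons, Multiset.eq_cons_iff_mem_erase, Multiset.mem_cons,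
        Multiset.mem_singleton, Prod.mk.injEq] at h
    · obtain ⟨⟨rfl, rfl⟩ | ⟨rfl, rfl⟩, h⟩ := h <;> simp [Multiset.cons_eq_iff_mem_erase] at h
    · have := hb (d, e) (by simp)
      have := hb (d, e') (by simp)
      obtain ⟨⟨rfl, _⟩ | ⟨rfl, _⟩, rfl⟩ := h
      · omega
      · obtain ⟨rfl, rfl⟩ : e = 1 ∧ e' = 1 := by omega
        decide
  · rintro rfl
    exact Or.inr ⟨{(2, 1)}, 1, 1, 1, by decide, by decide⟩

/-- The permutation of `RT_4` interchanging `[(1,1),(1,1),(1,1),(1,1)]` and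
`[(2,1),(1,2)]` and fixing every other element is a nontrivial automorphism of the
partially ordered set `(RT_4, ⪯)`. -/
theorem luna_stmt15 :
    (∀ τ : Multiset (ℕ × ℕ), IsRT 4 τ → IsRT 4
      (if τ = ({(1, 1), (1, 1), (1, 1), (1, 1)} : Multiset (ℕ × ℕ)) then
        ({(2, 1), (1, 2)} : Multiset (ℕ × ℕ))
      else if τ = ({(2, 1), (1, 2)} : Multiset (ℕ × ℕ)) then
        ({(1, 1), (1, 1), (1, 1), (1, 1)} : Multiset (ℕ × ℕ))
      else τ)) ∧
    Set.BijOn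
      (fun τ : Multiset (ℕ × ℕ) =>
        if τ = ({(1, 1), (1, 1), (1, 1), (1, 1)} : Multiset (ℕ × ℕ)) then
          ({(2, 1), (1, 2)} : Multiset (ℕ × ℕ))
        else if τ = ({(2, 1), (1, 2)} : Multiset (ℕ × ℕ)) then
          ({(1, 1), (1, 1), (1, 1), (1, 1)} : Multiset (ℕ × ℕ))
        else τ)
      {τ | IsRT 4 τ} {τ | IsRT 4 τ} ∧
    (∀ τ μ : Multiset (ℕ × ℕ), IsRT 4 τ → IsRT 4 μ →
      (RTle τ μ ↔ RTle
        (if τ = ({(1, 1), (1, 1), (1, 1), (1, 1)} : Multiset (ℕ × ℕ)) then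
          ({(2, 1), (1, 2)} : Multiset (ℕ × ℕ))
        else if τ = ({(2, 1), (1, 2)} : Multiset (ℕ × ℕ)) then
          ({(1, 1), (1, 1), (1, 1), (1, 1)} : Multiset (ℕ × ℕ))
        else τ)
        (if μ = ({(1, 1), (1, 1), (1, 1), (1, 1)} : Multiset (ℕ × ℕ)) then
          ({(2, 1), (1, 2)} : Multiset (ℕ × ℕ))
        else if μ = ({(2, 1), (1, 2)} : Multiset (ℕ × ℕ)) then
          ({(1, 1), (1, 1), (1, 1), (1, 1)} : Multiset (ℕ × ℕ))
        else μ))) ∧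
    ({(2, 1), (1, 2)} : Multiset (ℕ × ℕ)) ≠
      ({(1, 1), (1, 1), (1, 1), (1, 1)} : Multiset (ℕ × ℕ)) := by
  simp only [← Equiv.swap_apply_def]
  have hτ₀ : IsRT 4 τ₀ := ⟨by decide, by decide⟩
  have hν₀ : IsRT 4 ν₀ := ⟨by decide, by decide⟩
  have hbij := Equiv.bijOn_swap (s := {τ | IsRT 4 τ}) hτ₀ hν₀
  have same_refinements : ∀ c, ElemRef τ₀ c ↔ ElemRef ν₀ c := fun c ↦ by
    rw [elemRef_tau0_left_iff, elemRef_nu0_left_iff]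
  have same_coarsenings : ∀ b ∈ {τ | IsRT 4 τ}, ElemRef b τ₀ ↔ ElemRef b ν₀ := fun b hb ↦ by
    have hpos : ∀ p ∈ b, 0 < p.2 := fun p hp ↦ (hb.1 p hp).2
    rw [elemRef_tau0_right_iff hpos, elemRef_nu0_right_iff hpos]
  refine ⟨fun τ hτ ↦ hbij.mapsTo hτ, hbij, fun τ μ _ hμ ↦ ?_, by decide⟩
  exact (Relation.reflTransGen_swap_apply_iff (s := {τ | IsRT 4 τ}) (fun _ _ ↦ IsRT.of_elemRef)
    hτ₀ hν₀ same_refinements same_coarsenings hμ).symm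
end
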